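/- Resonance lower bound for equal signs: Let 0 < c < 1, ξ₁, ξ₂ ∈ ℝ³, τ₁, τ₂ ∈ ℝ, and set ξ = ξ₁ + ξ₂, τ = τ₁ + τ₂. Then for either choice of sign ±₀: max(⟨τ ±₀ c|ξ|⟩, ⟨τ₁ − |ξ₁|⟩, ⟨τ₂ − |ξ₂|⟩) ≥ ((1−c)/3)(|ξ₁| + |ξ₂|); in particular this maximum is at least ((1−c)/3)·max(|ξ₁|, |ξ₂|). -/

import Mathlib

noncomputable section

open MeasureTheory Real ENNReal


abbrev Sp3 := EuclideanSpace ℝ (Fin 3)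

/-- Japanese bracket `⟨r⟩ = (1 + r²)^{1/2}`. -/
def jb (r : ℝ) : ℝ := Real.sqrt (1 + r ^ 2)

/-- Space-time Fourier transform on `ℝ³ × ℝ`. -/
def ftST (u : Sp3 × ℝ → ℂ) (p : Sp3 × ℝ) : ℂ :=
  ∫ q : Sp3 × ℝ, Complex.exp (-Complex.I * (((inner ℝ q.1 p.1 : ℝ) + q.2 * p.2 : ℝ) : ℂ)) * u q

/-- Inverse space-time Fourier transform on `ℝ³ × ℝ`. -/
def ftSTinv (u : Sp3 × ℝ → ℂ) (q : Sp3 × ℝ) : ℂ :=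
  (((2 * Real.pi) ^ (4 : ℕ) : ℝ) : ℂ)⁻¹ *
    ∫ p : Sp3 × ℝ, Complex.exp (Complex.I * (((inner ℝ q.1 p.1 : ℝ) + q.2 * p.2 : ℝ) : ℂ)) * u p

/-- `X^{s,b}`-type norm with sign `σ` and propagation speed `c` (wave case: `c = 1`). -/
def Xnorm (σ c s b : ℝ) (u : Sp3 × ℝ → ℂ) : ℝ≥0∞ :=
  (∫⁻ p : Sp3 × ℝ,
      ENNReal.ofReal
        (jb ‖p.1‖ ^ (2 * s) * jb (p.2 + σ * c * ‖p.1‖) ^ (2 * b) * ‖ftST u p‖ ^ 2)) ^ (1 / 2 : ℝ)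

/-- Dyadic frequency-modulation block `K^{σ,c}_{N,L}`. -/
def Kset (σ c N L : ℝ) : Set (Sp3 × ℝ) :=
  {p | N ≤ jb ‖p.1‖ ∧ jb ‖p.1‖ ≤ 2 * N ∧ L ≤ jb (p.2 + σ * c * ‖p.1‖) ∧
    jb (p.2 + σ * c * ‖p.1‖) ≤ 2 * L}

/-- Space-time Fourier projection onto the set `K`. -/
def Pproj (K : Set (Sp3 × ℝ)) (u : Sp3 × ℝ → ℂ) : Sp3 × ℝ → ℂ :=
  ftSTinv (K.indicator (ftST u))

def IsDyadic (N : ℝ) : Prop := ∃ k : ℕ, N = 2 ^ k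

/-- `Q_ω`: space-time frequencies whose spatial direction lies in `ω ⊆ S²`. -/
def Qcap (ω : Set Sp3) : Set (Sp3 × ℝ) := {p | p.1 ≠ 0 ∧ ‖p.1‖⁻¹ • p.1 ∈ ω}

/-- Angular separation of two subsets of the sphere. -/
def angSep (ω₁ ω₂ : Set Sp3) : ℝ :=
  sInf {θ : ℝ | ∃ x ∈ ω₁, ∃ y ∈ ω₂, θ = InnerProductGeometry.angle x y}

/-- The trilinear convolution form `I(f,g₁,g₂)`. -/
def trI (f g₁ g₂ : Sp3 × ℝ → ℂ) : ℂ :=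
  ∫ q : (Sp3 × ℝ) × (Sp3 × ℝ), f (q.1.1 + q.2.1, q.1.2 + q.2.2) * g₁ q.1 * g₂ q.2

/-! The three modulations sum, up to sign, to `|ξ₁| + |ξ₂| ± c|ξ₁ + ξ₂|`, which the triangle
inequality bounds below by `(1 - c)(|ξ₁| + |ξ₂|)`; so one of them has size at least a third of
that, and `|r| ≤ ⟨r⟩`. -/

theorem abs_le_jb (r : ℝ) : |r| ≤ jb r := by
  rw [jb, ← Real.sqrt_sq_eq_abs]
  exact Real.sqrt_le_sqrt (by linarith)

theorem one_sub_abs_mul_norm_add_norm_le {E : Type*} [SeminormedAddCommGroup E] (x y : E)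
    (s t κ : ℝ) :
    (1 - |κ|) * (‖x‖ + ‖y‖) ≤ |s + t + κ * ‖x + y‖| + |s - ‖x‖| + |t - ‖y‖| := by
  have hκ : -(|κ| * (‖x‖ + ‖y‖)) ≤ κ * ‖x + y‖ :=
    calc -(|κ| * (‖x‖ + ‖y‖)) ≤ -(|κ| * ‖x + y‖) :=
          neg_le_neg (mul_le_mul_of_nonneg_left (norm_add_le x y) (abs_nonneg κ))
      _ = -|κ * ‖x + y‖| := by rw [abs_mul, abs_norm]
      _ ≤ κ * ‖x + y‖ := neg_abs_le _
  have hsplit : ‖x‖ + ‖y‖ + κ * ‖x + y‖ = (s + t + κ * ‖x + y‖) - (s - ‖x‖) - (t - ‖y‖) := by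
    ring
  calc (1 - |κ|) * (‖x‖ + ‖y‖) ≤ ‖x‖ + ‖y‖ + κ * ‖x + y‖ := by linarith
    _ ≤ |s + t + κ * ‖x + y‖| + |s - ‖x‖| + |t - ‖y‖| := by
      rw [hsplit]
      linarith [le_abs_self (s + t + κ * ‖x + y‖), neg_abs_le (s - ‖x‖), neg_abs_le (t - ‖y‖)]

theorem add_add_le_three_mul_max (a b d : ℝ) : a + b + d ≤ 3 * max a (max b d) := by
  linarith [le_max_left a (max b d), le_max_left b d, le_max_right b d,
    le_max_right a (max b d)]

/-- Resonance lower bound for equal signs (Lemma 1.1). -/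
theorem resonance_equal_signs (c : ℝ) (hc0 : 0 < c) (hc1 : c < 1)
    (ξ₁ ξ₂ : Sp3) (τ₁ τ₂ : ℝ) (σ₀ : ℝ) (hσ₀ : σ₀ = 1 ∨ σ₀ = -1) :
    (1 - c) / 3 * (‖ξ₁‖ + ‖ξ₂‖) ≤
        max (jb (τ₁ + τ₂ + σ₀ * c * ‖ξ₁ + ξ₂‖)) (max (jb (τ₁ - ‖ξ₁‖)) (jb (τ₂ - ‖ξ₂‖))) ∧
      (1 - c) / 3 * max ‖ξ₁‖ ‖ξ₂‖ ≤
        max (jb (τ₁ + τ₂ + σ₀ * c * ‖ξ₁ + ξ₂‖)) (max (jb (τ₁ - ‖ξ₁‖)) (jb (τ₂ - ‖ξ₂‖))) := by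
  have hσc : |σ₀ * c| = c := by
    rcases hσ₀ with rfl | rfl <;> simp [abs_of_pos hc0]
  have hsum := one_sub_abs_mul_norm_add_norm_le ξ₁ ξ₂ τ₁ τ₂ (σ₀ * c)
  rw [hσc] at hsum
  have hjb := add_add_le_three_mul_max (jb (τ₁ + τ₂ + σ₀ * c * ‖ξ₁ + ξ₂‖)) (jb (τ₁ - ‖ξ₁‖))
    (jb (τ₂ - ‖ξ₂‖))
  have hmain : (1 - c) / 3 * (‖ξ₁‖ + ‖ξ₂‖) ≤
      max (jb (τ₁ + τ₂ + σ₀ * c * ‖ξ₁ + ξ₂‖)) (max (jb (τ₁ - ‖ξ₁‖)) (jb (τ₂ - ‖ξ₂‖))) := by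
    linarith [abs_le_jb (τ₁ + τ₂ + σ₀ * c * ‖ξ₁ + ξ₂‖), abs_le_jb (τ₁ - ‖ξ₁‖),
      abs_le_jb (τ₂ - ‖ξ₂‖)]
  refine ⟨hmain, le_trans ?_ hmain⟩
  exact mul_le_mul_of_nonneg_left (max_le_add_of_nonneg (norm_nonneg _) (norm_nonneg _))
    (by linarith)
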